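/- arXiv:2102.06727 — 4 statements merged into one kernel-verified Lean document; each statement's English description precedes it below -/
import Mathlib

section
/- (Soundness of the Append rule) For all programs P, C, Q, γ, if the operational triple ⟨P⟩ C ⟨Q⟩ holds, then the operational triple ⟨P⟩ C;γ ⟨Q;γ⟩ holds. -/
def pst {σ : Type*} (R : σ → σ → Prop) : Set σ := {t | ∃ s, R s t}

def seqc {σ : Type*} (R S : σ → σ → Prop) : σ → σ → Prop :=
  fun s t => ∃ u, R s u ∧ S u t

def triple {σ : Type*} (P C Q : σ → σ → Prop) : Prop :=
  pst (seqc P C) ⊆ pst Q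

def test {σ : Type*} (B : σ → Prop) : σ → σ → Prop :=
  fun s t => s = t ∧ B s

def iter {σ : Type*} (R : σ → σ → Prop) : ℕ → (σ → σ → Prop)
  | 0 => fun s t => s = t
  | (n + 1) => seqc R (iter R n)

def whileRel {σ : Type*} (B : σ → Prop) (C : σ → σ → Prop) : σ → σ → Prop :=
  fun s t => ∃ n : ℕ, seqc (iter (seqc (test B) C) n) (test (fun s => ¬ B s)) s t

theorem seqc_assoc {σ : Type*} (R S T : σ → σ → Prop) :
    seqc (seqc R S) T = seqc R (seqc S T) := by
  funext s t
  exact propext ⟨fun ⟨v, ⟨u, hR, hS⟩, hT⟩ => ⟨u, hR, v, hS, hT⟩,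
    fun ⟨u, hR, v, hS, hT⟩ => ⟨v, ⟨u, hR, hS⟩, hT⟩⟩

theorem pst_seqc_mono {σ : Type*} {R R' : σ → σ → Prop} (S : σ → σ → Prop)
    (h : pst R ⊆ pst R') : pst (seqc R S) ⊆ pst (seqc R' S) := by
  rintro t ⟨s, u, hR, hS⟩
  obtain ⟨s', hR'⟩ := h ⟨s, hR⟩
  exact ⟨s', u, hR', hS⟩

theorem append_sound {σ : Type*} (P C Q γ : σ → σ → Prop)
    (h : triple P C Q) : triple P (seqc C γ) (seqc Q γ) := by
  rw [triple, ← seqc_assoc]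
  exact pst_seqc_mono γ h
end

section
/- (Soundness of the Sequential Composition rule) For all programs P, C1, C2, Q, γ, if the operational triples ⟨P⟩ C1 ⟨Q⟩ and ⟨Q⟩ C2 ⟨γ⟩ hold, then the operational triple ⟨P⟩ C1;C2 ⟨γ⟩ holds. -/
theorem seq_composition_sound {σ : Type*} (P C1 C2 Q γ : σ → σ → Prop)
    (h1 : triple P C1 Q) (h2 : triple Q C2 γ) : triple P (seqc C1 C2) γ := by
  rw [triple, ← seqc_assoc]
  exact (pst_seqc_mono C2 h1).trans h2
end

section
/- (Operational-invariant claim for the While rule) Let P and P' be programs, B a predicate on states, and C the relation of the loop body. Assume pst(P') = pst(P) ∩ {s | B s} and the operational triple ⟨P'⟩ C ⟨P⟩ holds. Then for every natural number i and all states s, t: if s ∈ pst(P) and t is reachable from s by i iterations of one loop step (i.e., (test B ; C) composed with itself i times relates s to t), then t ∈ pst(P). -/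
theorem triple.mem_pst {σ : Type*} {P C Q : σ → σ → Prop} (h : triple P C Q) {s t : σ}
    (hs : s ∈ pst P) (hst : C s t) : t ∈ pst Q := by
  obtain ⟨r, hr⟩ := hs
  exact h ⟨r, s, hr, hst⟩

theorem mem_of_iter {σ : Type*} {R : σ → σ → Prop} {S : Set σ}
    (hS : ∀ s t, s ∈ S → R s t → t ∈ S) :
    ∀ (n : ℕ) (s t : σ), s ∈ S → iter R n s t → t ∈ S
  | 0, _, _, hs, rfl => hs
  | n + 1, s, _, hs, ⟨u, hsu, hut⟩ => mem_of_iter hS n u _ (hS s u hs hsu) hut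

theorem mem_pst_of_test_seqc {σ : Type*} {P P' C : σ → σ → Prop} {B : σ → Prop}
    (hP' : pst P ∩ {s | B s} ⊆ pst P') (h : triple P' C P) {s t : σ}
    (hs : s ∈ pst P) (hst : seqc (test B) C s t) : t ∈ pst P := by
  obtain ⟨_, ⟨rfl, hB⟩, hC⟩ := hst
  exact h.mem_pst (hP' ⟨hs, hB⟩) hC

theorem while_invariant_claim {σ : Type*} (P P' : σ → σ → Prop) (B : σ → Prop)
    (C : σ → σ → Prop)
    (hP' : pst P' = pst P ∩ {s | B s})
    (h : triple P' C P) :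
    ∀ (i : ℕ) (s t : σ), s ∈ pst P → iter (seqc (test B) C) i s t → t ∈ pst P :=
  mem_of_iter fun _ _ => mem_pst_of_test_seqc hP'.superset h
end

section
/- (Soundness of the If rule) Let P, P', P'', Q be programs, B a predicate on states, and C1, C2 the relations of the two branches. Assume pst(P') = pst(P) ∩ {s | B s}, pst(P'') = pst(P) ∩ {s | ¬ B s}, and the operational triples ⟨P'⟩ C1 ⟨Q⟩ and ⟨P''⟩ C2 ⟨Q⟩ hold. Then the operational triple ⟨P⟩ if B then C1 else C2 ⟨Q⟩ holds, where the relation of the conditional is (test B ; C1) ∪ (test(¬B) ; C2). -/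
theorem mem_pst_seqc {σ : Type*} {P C : σ → σ → Prop} {t : σ} :
    t ∈ pst (seqc P C) ↔ ∃ u ∈ pst P, C u t := by
  constructor
  · rintro ⟨s, u, hP, hC⟩
    exact ⟨u, ⟨s, hP⟩, hC⟩
  · rintro ⟨u, ⟨s, hP⟩, hC⟩
    exact ⟨s, u, hP, hC⟩

theorem triple_iff {σ : Type*} {P C Q : σ → σ → Prop} :
    triple P C Q ↔ ∀ u ∈ pst P, ∀ t, C u t → t ∈ pst Q := by
  simp only [triple, Set.subset_def, mem_pst_seqc]
  exact ⟨fun h u hu t hC => h t ⟨u, hu, hC⟩, fun h t ⟨u, hu, hC⟩ => h u hu t hC⟩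

theorem triple_or {σ : Type*} {P C D Q : σ → σ → Prop} (hC : triple P C Q) (hD : triple P D Q) :
    triple P (fun s t => C s t ∨ D s t) Q := by
  rw [triple_iff] at *
  rintro u hu t (h | h)
  exacts [hC u hu t h, hD u hu t h]

theorem triple_test_seqc {σ : Type*} {P P' C Q : σ → σ → Prop} {B : σ → Prop}
    (hP' : pst P ∩ {s | B s} ⊆ pst P') (h : triple P' C Q) :
    triple P (seqc (test B) C) Q := by
  rw [triple_iff] at *
  rintro u hu t ⟨_, ⟨rfl, hB⟩, hC⟩
  exact h u (hP' ⟨hu, hB⟩) t hC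

theorem if_sound {σ : Type*} (P P' P'' Q : σ → σ → Prop) (B : σ → Prop)
    (C1 C2 : σ → σ → Prop)
    (hP' : pst P' = pst P ∩ {s | B s})
    (hP'' : pst P'' = pst P ∩ {s | ¬ B s})
    (h1 : triple P' C1 Q) (h2 : triple P'' C2 Q) :
    triple P (fun s t => seqc (test B) C1 s t ∨ seqc (test (fun s => ¬ B s)) C2 s t) Q :=
  triple_or (triple_test_seqc hP'.ge h1) (triple_test_seqc hP''.ge h2)
end
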